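/- arXiv:2009.03242 — 4 statements merged into one kernel-verified Lean document; each statement's English description precedes it below -/
import Mathlib

section
/- Let a, b : ℕ → Bool be bit sequences and c₋₁ : Bool an incoming carry, and define the carry bits by c_i = (a_i ∧ b_i) ∨ (a_i ∧ c_{i-1}) ∨ (b_i ∧ c_{i-1}) for all i ≥ 0. Then for every i ≥ 0, the carry bit c_i is true if and only if (∑_{k=0}^{i} a_k.toNat · 2^k) + (∑_{k=0}^{i} b_k.toNat · 2^k) + c₋₁.toNat ≥ 2^{i+1}. That is, c_i is exactly the carry out of position i of the binary addition of a, b and c₋₁. -/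
/-- `rippleCarry a b cin i` is the carry bit `c_{i-1}` of the addition of the
bit sequences `a` and `b` with incoming carry `cin = c₋₁`, defined by the
recurrence `c_i = (a_i ∧ b_i) ∨ (a_i ∧ c_{i-1}) ∨ (b_i ∧ c_{i-1})` for `i ≥ 0`
and `c₋₁ = cin`. -/
def rippleCarry (a b : ℕ → Bool) (cin : Bool) : ℕ → Bool
  | 0 => cin
  | i + 1 =>
      (a i && b i) || (a i && rippleCarry a b cin i) || (b i && rippleCarry a b cin i)

lemma sum_bits_lt (a : ℕ → Bool) (i : ℕ) :
    (∑ k ∈ Finset.range i, (a k).toNat * 2 ^ k) < 2 ^ i := by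
  induction i with
  | zero => simp
  | succ n ih =>
      rw [Finset.sum_range_succ, pow_succ]
      cases hA : a n <;> simp <;> omega

lemma carry_iff_aux (a b : ℕ → Bool) (cin : Bool) (i : ℕ) :
    rippleCarry a b cin i = true ↔
      2 ^ i ≤
        (∑ k ∈ Finset.range i, (a k).toNat * 2 ^ k) +
          (∑ k ∈ Finset.range i, (b k).toNat * 2 ^ k) + cin.toNat := by
  induction i with
  | zero => cases cin <;> simp [rippleCarry]
  | succ n ih =>
      have ha := sum_bits_lt a n
      have hb := sum_bits_lt b n
      have hc : cin.toNat ≤ 1 := Bool.toNat_le cin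
      rw [rippleCarry, Finset.sum_range_succ, Finset.sum_range_succ]
      cases hA : a n <;> cases hB : b n <;>
        simp [hA, hB, ih, pow_succ] <;> omega

/-- **Carry bit characterization.** For every `i ≥ 0`, the carry bit `c_i`
(defined by the ripple-carry recurrence with incoming carry `c₋₁`) is `true`
if and only if
`(∑_{k=0}^{i} a_k·2^k) + (∑_{k=0}^{i} b_k·2^k) + c₋₁ ≥ 2^{i+1}`,
i.e. `c_i` is exactly the carry out of position `i` of the binary addition of
`a`, `b` and `c₋₁`. -/
theorem carry_bit_iff (a b : ℕ → Bool) (cin : Bool) (i : ℕ) :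
    rippleCarry a b cin (i + 1) = true ↔
      2 ^ (i + 1) ≤
        (∑ k ∈ Finset.range (i + 1), (a k).toNat * 2 ^ k) +
          (∑ k ∈ Finset.range (i + 1), (b k).toNat * 2 ^ k) + cin.toNat := by
  exact carry_iff_aux a b cin (i + 1)
end

section
/- Let a, b : ℕ → Bool be bit sequences. For i ≤ j define the propagate bit p_{j,i} = ⋀_{l=i}^{j} (a_l ⊕ b_l) and the generate bit g_{j,i} = decide((∑_{l=i}^{j} a_l.toNat · 2^{l-i}) + (∑_{l=i}^{j} b_l.toNat · 2^{l-i}) ≥ 2^{j-i+1}). Then for all i ≤ k < j, the generation composition rule holds: g_{j,i} = g_{j,k+1} ∨ (g_{k,i} ∧ p_{j,k+1}). In particular the right-hand side is independent of the choice of the splitting index k. -/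
/-- The propagate bit `p_{j,i} = ⋀_{l=i}^{j} (a_l ⊕ b_l)` of the block of bit
positions `i` through `j`: it expresses that a carry entering the block is
propagated through the entire block. -/
def propagate (a b : ℕ → Bool) (i j : ℕ) : Bool :=
  decide (∀ l ∈ Finset.Icc i j, xor (a l) (b l) = true)

/-- The generate bit
`g_{j,i} = decide((∑_{l=i}^{j} a_l·2^{l-i}) + (∑_{l=i}^{j} b_l·2^{l-i}) ≥ 2^{j-i+1})`
of the block of bit positions `i` through `j`: it expresses that the block
generates a carry-out even with carry-in `0`. -/
def generate (a b : ℕ → Bool) (i j : ℕ) : Bool :=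
  decide (2 ^ (j - i + 1) ≤
    (∑ l ∈ Finset.Icc i j, (a l).toNat * 2 ^ (l - i)) +
      (∑ l ∈ Finset.Icc i j, (b l).toNat * 2 ^ (l - i)))

/-!
Put `c_l = a_l + b_l ∈ {0, 1, 2}` and let `L` and `H` be the base-2 values, with digits `c`, of the
low block `i, …, k` (length `m`) and the high block `k + 1, …, j` (length `n`). The whole block has
value `L + 2^m H` with `L ≤ 2^(m+1) - 2`, so it reaches `2^(m+n)` iff either `H ≥ 2^n` (the high
block generates) or `H = 2^n - 1` and `L ≥ 2^m` (the low block generates and its carry runs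
through). With digits at most `2`, `H = 2^n - 1` forces every digit of the high block to be `1`,
which is exactly propagation.
-/

open Finset

def blockValue (c : ℕ → ℕ) (i n : ℕ) : ℕ := ∑ t ∈ range n, c (i + t) * 2 ^ t

section BlockValue

variable {c : ℕ → ℕ}

lemma blockValue_add (i m n : ℕ) :
    blockValue c i (m + n) = blockValue c i m + 2 ^ m * blockValue c (i + m) n := by
  simp only [blockValue, sum_range_add, mul_sum, pow_add, add_assoc]
  congr 1
  exact sum_congr rfl fun t _ => by ring

lemma blockValue_add_two_le (hc : ∀ l, c l ≤ 2) (i n : ℕ) :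
    blockValue c i n + 2 ≤ 2 ^ (n + 1) := by
  induction n with
  | zero => simp [blockValue]
  | succ n ih =>
    have hn : c (i + n) * 2 ^ n ≤ 2 * 2 ^ n := Nat.mul_le_mul_right _ (hc _)
    rw [blockValue, sum_range_succ, ← blockValue, pow_succ _ (n + 1)]
    omega

lemma blockValue_add_one_eq_two_pow_iff (hc : ∀ l, c l ≤ 2) (i n : ℕ) :
    blockValue c i n + 1 = 2 ^ n ↔ ∀ t < n, c (i + t) = 1 := by
  induction n with
  | zero => simp [blockValue]
  | succ n ih =>
    have hlow := blockValue_add_two_le hc i n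
    rw [blockValue, sum_range_succ, ← blockValue, pow_succ, Nat.forall_lt_succ_right, ← ih]
    -- the top digit is forced: `0` leaves the sum too small, `2` makes it too large
    have htop := hc (i + n)
    interval_cases c (i + n) <;> omega

lemma le_add_mul_iff_of_lt {M N L H : ℕ} (hL : L < 2 * M) :
    M * N ≤ L + M * H ↔ N ≤ H ∨ (M ≤ L ∧ H + 1 = N) := by
  constructor
  · intro h
    rcases le_or_gt N H with hNH | hHN
    · exact Or.inl hNH
    obtain rfl | hH2 : N = H + 1 ∨ H + 2 ≤ N := by omega
    · exact Or.inr ⟨by nlinarith, rfl⟩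
    · nlinarith [Nat.mul_le_mul_left M hH2]
  · rintro (hNH | ⟨hML, rfl⟩)
    · nlinarith [Nat.mul_le_mul_left M hNH]
    · nlinarith

theorem two_pow_le_blockValue_add_iff (hc : ∀ l, c l ≤ 2) (i m n : ℕ) :
    2 ^ (m + n) ≤ blockValue c i (m + n) ↔
      2 ^ n ≤ blockValue c (i + m) n ∨
        (2 ^ m ≤ blockValue c i m ∧ blockValue c (i + m) n + 1 = 2 ^ n) := by
  have hlow := blockValue_add_two_le hc i m
  rw [blockValue_add, pow_add]
  exact le_add_mul_iff_of_lt (by rw [pow_succ] at hlow; omega)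

end BlockValue

lemma generate_eq_decide_blockValue (a b : ℕ → Bool) (i n : ℕ) :
    generate a b i (i + n) =
      decide (2 ^ (n + 1) ≤ blockValue (fun l => (a l).toNat + (b l).toNat) i (n + 1)) := by
  simp only [generate, blockValue, ← Ico_add_one_right_eq_Icc, ← sum_add_distrib, ← add_mul,
    sum_Ico_eq_sum_range, Nat.add_sub_cancel_left, add_assoc]

lemma Bool.toNat_add_toNat_eq_one_iff {x y : Bool} : x.toNat + y.toNat = 1 ↔ xor x y = true := by
  cases x <;> cases y <;> decide

lemma propagate_eq_decide (a b : ℕ → Bool) (i n : ℕ) :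
    propagate a b i (i + n) =
      decide (∀ t < n + 1, (a (i + t)).toNat + (b (i + t)).toNat = 1) := by
  simp only [propagate, decide_eq_decide, mem_Icc]
  constructor
  · intro h t ht
    exact Bool.toNat_add_toNat_eq_one_iff.2 (h _ ⟨by omega, by omega⟩)
  · rintro h l ⟨hil, hli⟩
    obtain ⟨t, rfl⟩ := Nat.exists_eq_add_of_le hil
    exact Bool.toNat_add_toNat_eq_one_iff.1 (h t (by omega))

/-- **Generation composition rule.** For all `i ≤ k < j`:
`g_{j,i} = g_{j,k+1} ∨ (g_{k,i} ∧ p_{j,k+1})`; in particular the right-hand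
side is independent of the choice of the splitting index `k`. -/
theorem generate_comp (a b : ℕ → Bool) (i k j : ℕ) (hik : i ≤ k) (hkj : k < j) :
    generate a b i j = (generate a b (k + 1) j || (generate a b i k && propagate a b (k + 1) j)) := by
  obtain ⟨m, rfl⟩ := Nat.exists_eq_add_of_le hik
  obtain ⟨n, rfl⟩ := Nat.exists_eq_add_of_lt hkj
  have hc (l : ℕ) : (a l).toNat + (b l).toNat ≤ 2 :=
    add_le_add (Bool.toNat_le _) (Bool.toNat_le _)
  rw [show i + m + n + 1 = i + (m + 1 + n) by ring, generate_eq_decide_blockValue,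
    show i + (m + 1 + n) = i + m + 1 + n by ring, generate_eq_decide_blockValue,
    generate_eq_decide_blockValue, propagate_eq_decide, ← Bool.decide_and, ← Bool.decide_or]
  refine decide_eq_decide.mpr ?_
  rw [show m + 1 + n + 1 = (m + 1) + (n + 1) by ring, two_pow_le_blockValue_add_iff hc,
    blockValue_add_one_eq_two_pow_iff hc]
  rfl
end

section
/- Let a, b : ℕ → Bool be bit sequences and c₋₁ : Bool an incoming carry, and define the carry bits by c_i = (a_i ∧ b_i) ∨ (a_i ∧ c_{i-1}) ∨ (b_i ∧ c_{i-1}) for i ≥ 0. Define p_{i,0} = ⋀_{l=0}^{i} (a_l ⊕ b_l) and g_{i,0} = decide((∑_{l=0}^{i} a_l.toNat · 2^l) + (∑_{l=0}^{i} b_l.toNat · 2^l) ≥ 2^{i+1}). Then for all i ≥ 0, the carry look ahead formula holds: c_i = g_{i,0} ∨ (p_{i,0} ∧ c₋₁). -/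
/-!
The carry `c_i` is the overflow bit of the `(i+1)`-bit addition `A + B + c₋₁`, where `A`, `B`
are the values of the low `i+1` bits of `a`, `b`: the majority recurrence is exactly how that
overflow propagates from one bit to the next. Likewise `g_{i,0}` is the overflow of `A + B`, and
`p_{i,0}` holds iff `A + B = 2^{i+1} - 1`, the only value at which the extra `c₋₁` changes the
overflow.
-/

def lowValue (a : ℕ → Bool) (n : ℕ) : ℕ :=
  ∑ l ∈ Finset.range n, (a l).toNat * 2 ^ l

namespace lowValue

variable (a b : ℕ → Bool)

theorem succ (n : ℕ) : lowValue a (n + 1) = lowValue a n + (a n).toNat * 2 ^ n :=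
  Finset.sum_range_succ _ n

theorem lt_two_pow (n : ℕ) : lowValue a n < 2 ^ n := by
  induction n with
  | zero => simp [lowValue]
  | succ n ih =>
    calc lowValue a (n + 1) = lowValue a n + (a n).toNat * 2 ^ n := succ a n
      _ < 2 ^ n + 1 * 2 ^ n :=
        Nat.add_lt_add_of_lt_of_le ih (Nat.mul_le_mul_right _ (Bool.toNat_le _))
      _ = 2 ^ (n + 1) := by ring

theorem eq_sum_Icc_zero (i : ℕ) :
    lowValue a (i + 1) = ∑ l ∈ Finset.Icc 0 i, (a l).toNat * 2 ^ (l - 0) := by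
  rw [lowValue, Nat.range_succ_eq_Icc_zero]
  rfl

theorem forall_xor_iff (n : ℕ) :
    (∀ l < n, xor (a l) (b l) = true) ↔ lowValue a n + lowValue b n + 1 = 2 ^ n := by
  induction n with
  | zero => simp [lowValue]
  | succ n ih =>
    have ha := lt_two_pow a n
    have hb := lt_two_pow b n
    simp only [Nat.lt_succ_iff_lt_or_eq, or_imp, forall_and, forall_eq, ih, succ, pow_succ]
    cases a n <;> cases b n <;>
      simp only [bne_self_eq_false, Bool.bne_true, Bool.bne_false, Bool.not_false,
        Bool.false_eq_true, and_true, and_false, false_iff, Bool.toNat_true, Bool.toNat_false,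
        one_mul, zero_mul, add_zero] <;>
      omega

end lowValue

theorem rippleCarry_eq_decide (a b : ℕ → Bool) (cin : Bool) (n : ℕ) :
    rippleCarry a b cin n = decide (2 ^ n ≤ lowValue a n + lowValue b n + cin.toNat) := by
  induction n with
  | zero => cases cin <;> simp [rippleCarry, lowValue]
  | succ n ih =>
    have ha := lowValue.lt_two_pow a n
    have hb := lowValue.lt_two_pow b n
    have hc := Bool.toNat_le cin
    rw [rippleCarry, ih, lowValue.succ, lowValue.succ, pow_succ]
    cases a n <;> cases b n <;>
      simp only [Bool.and_self, Bool.and_true, Bool.and_false, Bool.true_and, Bool.false_and,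
        Bool.or_self, Bool.or_false, Bool.false_or, Bool.true_or, Bool.toNat_true,
        Bool.toNat_false, one_mul, zero_mul, add_zero, decide_eq_decide, true_eq_decide_iff,
        false_eq_decide_iff] <;>
      omega

theorem generate_zero_eq_decide (a b : ℕ → Bool) (i : ℕ) :
    generate a b 0 i = decide (2 ^ (i + 1) ≤ lowValue a (i + 1) + lowValue b (i + 1)) := by
  rw [generate, lowValue.eq_sum_Icc_zero, lowValue.eq_sum_Icc_zero, Nat.sub_zero]

theorem propagate_zero_eq_decide (a b : ℕ → Bool) (i : ℕ) :
    propagate a b 0 i = decide (lowValue a (i + 1) + lowValue b (i + 1) + 1 = 2 ^ (i + 1)) := by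
  rw [propagate, decide_eq_decide, ← lowValue.forall_xor_iff]
  simp

/-- **Carry look ahead formula.** For all `i ≥ 0`, the carry bit `c_i` of the
addition of `a`, `b` with incoming carry `c₋₁` satisfies
`c_i = g_{i,0} ∨ (p_{i,0} ∧ c₋₁)`. -/
theorem carry_look_ahead (a b : ℕ → Bool) (cin : Bool) (i : ℕ) :
    rippleCarry a b cin (i + 1) =
      (generate a b 0 i || (propagate a b 0 i && cin)) := by
  rw [rippleCarry_eq_decide, generate_zero_eq_decide, propagate_zero_eq_decide]
  cases cin
  · simp
  · simp only [Bool.toNat_true, Bool.and_true, ← Bool.decide_or, decide_eq_decide]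
    omega
end

section
/- Let m ≥ 0, let a, b be natural numbers, and let c ∈ {0, 1}. Write a_lo = a mod 2^m, a_hi = ⌊a / 2^m⌋, b_lo = b mod 2^m, b_hi = ⌊b / 2^m⌋, let L = a_lo + b_lo + c be the sum of the lower halves with incoming carry c, and let c_mid = ⌊L / 2^m⌋ be the carry out of the lower half. Then c_mid ∈ {0, 1} and a + b + c = (L mod 2^m) + 2^m · (a_hi + b_hi + c_mid). Consequently, with the two precomputed upper sums S₀ = a_hi + b_hi (assuming no incoming carry) and S₁ = a_hi + b_hi + 1 (assuming an incoming carry), one has a + b + c = (L mod 2^m) + 2^m · (if c_mid = 1 then S₁ else S₀); this is the correctness of the Conditional Sum Adder decomposition, in which the upper bits of the sum depend on the lower halves only through the carry c_mid out of the lower half. -/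
namespace Nat

theorem mod_add_mod_add_div_le_one (a b K : ℕ) {c : ℕ} (hc : c ≤ 1) :
    (a % K + b % K + c) / K ≤ 1 := by
  rcases K.eq_zero_or_pos with rfl | hK
  · simp
  · have ha := mod_lt a hK
    have hb := mod_lt b hK
    exact le_of_lt_succ (Nat.div_lt_of_lt_mul (by omega))

theorem add_add_eq_mod_add_mul_div (a b c K : ℕ) :
    a + b + c = (a % K + b % K + c) % K + K * (a / K + b / K + (a % K + b % K + c) / K) := by
  have ha := mod_add_div a K
  have hb := mod_add_div b K
  have hL := mod_add_div (a % K + b % K + c) K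
  rw [mul_add, mul_add]
  omega

end Nat

/-- **Conditional Sum Adder decomposition.** Let `m ≥ 0`, let `a`, `b` be
natural numbers and `c ∈ {0, 1}` an incoming carry. Split the operands into
lower halves `a % 2^m`, `b % 2^m` and upper halves `a / 2^m`, `b / 2^m`, let
`L = a % 2^m + b % 2^m + c` be the sum of the lower halves with incoming carry,
and let `c_mid = L / 2^m` be the carry out of the lower half. Then
`c_mid ∈ {0, 1}`, and `a + b + c = (L % 2^m) + 2^m · (a/2^m + b/2^m + c_mid)`;
consequently, with the two precomputed upper sums `S₀ = a/2^m + b/2^m`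
(no incoming carry) and `S₁ = a/2^m + b/2^m + 1` (incoming carry), one has
`a + b + c = (L % 2^m) + 2^m · (if c_mid = 1 then S₁ else S₀)`: the upper bits
of the sum depend on the lower halves only through the carry `c_mid`. -/
theorem conditional_sum_adder_correct (m a b c : ℕ) (hc : c = 0 ∨ c = 1) :
    ((a % 2 ^ m + b % 2 ^ m + c) / 2 ^ m = 0 ∨
      (a % 2 ^ m + b % 2 ^ m + c) / 2 ^ m = 1) ∧
    a + b + c =
      (a % 2 ^ m + b % 2 ^ m + c) % 2 ^ m +
        2 ^ m * (a / 2 ^ m + b / 2 ^ m + (a % 2 ^ m + b % 2 ^ m + c) / 2 ^ m) ∧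
    a + b + c =
      (a % 2 ^ m + b % 2 ^ m + c) % 2 ^ m +
        2 ^ m *
          (if (a % 2 ^ m + b % 2 ^ m + c) / 2 ^ m = 1 then
            a / 2 ^ m + b / 2 ^ m + 1
          else
            a / 2 ^ m + b / 2 ^ m) := by
  have hcarry := Nat.le_one_iff_eq_zero_or_eq_one.mp <|
    Nat.mod_add_mod_add_div_le_one a b (2 ^ m) (show c ≤ 1 by omega)
  have hsum := Nat.add_add_eq_mod_add_mul_div a b c (2 ^ m)
  refine ⟨hcarry, hsum, hsum.trans ?_⟩
  rcases hcarry with h | h <;> simp [h]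
end
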